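/- The solution of the group-lasso proximal problem Σ* = argmin_Σ { (1/2)‖Σ − Σ̂‖_F² + 2ω ∑_{i<m} √(d_i d_m) ‖Σ_im‖_F + ω ∑_i √(d_i(d_i−1)) ‖Δ_i ∗ Σ_ii‖_F } is given blockwise by soft-thresholding: for off-diagonal entries of block (i,m), (Σ*)_{ij,mt} = 0 if S_{i,m} ≤ ω γ_{i,m}, and (Σ*)_{ij,mt} = (Σ̂)_{ij,mt}(1 − ω γ_{i,m}/S_{i,m}) if S_{i,m} > ω γ_{i,m}; diagonal entries (i,j)=(m,t) are left unchanged. Here S_{i,m} is the Frobenius norm of the off-diagonal part of block (i,m) of Σ̂ and γ_{i,m} = √(d_i d_m) for i ≠ m, γ_{i,i} = √(d_i(d_i−1)). -/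
import Mathlib


open Matrix

variable {k : ℕ}

/-- The row/column index set of a `q × q` matrix partitioned into blocks of sizes
`d 0, …, d (k-1)`, `q = d 0 + ⋯ + d (k-1)`. -/
abbrev BIdx (d : Fin k → ℕ) : Type := Σ i : Fin k, Fin (d i)

/-- `S_{i,m}` : the Frobenius norm of the off-diagonal part of block `(i,m)` of `Σ̂`
(for `i ≠ m` this is the full block; for `i = m` the diagonal entries are omitted). -/
noncomputable def Sblk (d : Fin k → ℕ) (Shat : Matrix (BIdx d) (BIdx d) ℝ)
    (i m : Fin k) : ℝ :=
  Real.sqrt (∑ a : Fin (d i), ∑ b : Fin (d m),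
    if (⟨i, a⟩ : BIdx d) = ⟨m, b⟩ then 0 else (Shat ⟨i, a⟩ ⟨m, b⟩) ^ 2)

/-- `γ_{i,m} = √(d_i d_m)` for `i ≠ m` and `γ_{i,i} = √(d_i (d_i − 1))`. -/
noncomputable def gamBlk (d : Fin k → ℕ) (i m : Fin k) : ℝ :=
  if i = m then Real.sqrt ((d i : ℝ) * ((d i : ℝ) - 1))
  else Real.sqrt ((d i : ℝ) * (d m : ℝ))

/-- The group-lasso objective
`(1/2)‖Σ − Σ̂‖_F² + 2ω ∑_{i<m} √(d_i d_m) ‖Σ_im‖_F + ω ∑_i √(d_i(d_i−1)) ‖Δ_i ∗ Σ_ii‖_F`. -/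
noncomputable def objGL (d : Fin k → ℕ) (ω : ℝ)
    (Shat S : Matrix (BIdx d) (BIdx d) ℝ) : ℝ :=
  (1 / 2) * ∑ p : BIdx d, ∑ r : BIdx d, (S p r - Shat p r) ^ 2 +
    2 * ω * ∑ i : Fin k, ∑ m : Fin k,
      (if i < m then
        Real.sqrt ((d i : ℝ) * (d m : ℝ)) *
          Real.sqrt (∑ a : Fin (d i), ∑ b : Fin (d m), (S ⟨i, a⟩ ⟨m, b⟩) ^ 2)
      else 0) +
    ω * ∑ i : Fin k, Real.sqrt ((d i : ℝ) * ((d i : ℝ) - 1)) *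
      Real.sqrt (∑ a : Fin (d i), ∑ b : Fin (d i),
        if a = b then 0 else (S ⟨i, a⟩ ⟨i, b⟩) ^ 2)

/-- The blockwise soft-thresholding matrix `Σ*` : diagonal entries are unchanged;
off-diagonal entries of block `(i,m)` are set to `0` if `S_{i,m} ≤ ω γ_{i,m}`, and
scaled by `1 − ω γ_{i,m} / S_{i,m}` otherwise. -/
noncomputable def sigmaStar (d : Fin k → ℕ) (ω : ℝ)
    (Shat : Matrix (BIdx d) (BIdx d) ℝ) : Matrix (BIdx d) (BIdx d) ℝ :=
  fun p r =>
    if p = r then Shat p r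
    else if Sblk d Shat p.1 r.1 ≤ ω * gamBlk d p.1 r.1 then 0
    else Shat p r * (1 - ω * gamBlk d p.1 r.1 / Sblk d Shat p.1 r.1)


variable {d : Fin k → ℕ}

lemma sigma_mk_ne {i m : Fin k} (h : i ≠ m) (a : Fin (d i)) (b : Fin (d m)) :
    (⟨i, a⟩ : BIdx d) ≠ ⟨m, b⟩ := by
  intro he; exact h (congrArg Sigma.fst he)

lemma sigma_mk_eq_iff {i : Fin k} (a b : Fin (d i)) :
    (⟨i, a⟩ : BIdx d) = ⟨i, b⟩ ↔ a = b := by simp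

lemma prox_ineq {ι : Type*} [Fintype ι] (y z : ι → ℝ) (lam : ℝ) (hlam : 0 ≤ lam)
    (x : ι → ℝ)
    (hx : ∀ i, x i = if Real.sqrt (∑ j, y j ^ 2) ≤ lam then 0
        else y i * (1 - lam / Real.sqrt (∑ j, y j ^ 2))) :
    (1/2) * ∑ i, (x i - y i)^2 + lam * Real.sqrt (∑ i, x i ^2) ≤
      (1/2) * ∑ i, (z i - y i)^2 + lam * Real.sqrt (∑ i, z i ^ 2) := by
  set Y := Real.sqrt (∑ j, y j ^ 2) with hYdef
  set t := Real.sqrt (∑ i, z i ^ 2) with htdef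
  have hY0 : 0 ≤ Y := Real.sqrt_nonneg _
  have ht0 : 0 ≤ t := Real.sqrt_nonneg _
  have hYsq : Y ^ 2 = ∑ j, y j ^ 2 :=
    Real.sq_sqrt (Finset.sum_nonneg fun _ _ => sq_nonneg _)
  have htsq : t ^ 2 = ∑ i, z i ^ 2 :=
    Real.sq_sqrt (Finset.sum_nonneg fun _ _ => sq_nonneg _)
  have hCS : ∑ i, z i * y i ≤ t * Y := Real.sum_mul_le_sqrt_mul_sqrt _ _ _
  have hexp : ∑ i, (z i - y i) ^ 2 = t ^ 2 - 2 * ∑ i, z i * y i + Y ^ 2 := by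
    rw [htsq, hYsq, Finset.mul_sum, ← Finset.sum_sub_distrib, ← Finset.sum_add_distrib]
    exact Finset.sum_congr rfl fun i _ => by ring
  have hlow : t ^ 2 - 2 * (t * Y) + Y ^ 2 ≤ ∑ i, (z i - y i) ^ 2 := by
    rw [hexp]; nlinarith
  by_cases h : Y ≤ lam
  · have hx0 : ∀ i, x i = 0 := fun i => by rw [hx i, if_pos h]
    have h1 : ∑ i, (x i - y i) ^ 2 = Y ^ 2 := by
      rw [hYsq]; exact Finset.sum_congr rfl fun i _ => by rw [hx0 i]; ring
    have h2 : Real.sqrt (∑ i, x i ^ 2) = 0 := by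
      simp [hx0]
    rw [h1, h2]
    nlinarith
  · push_neg at h
    have hYpos : 0 < Y := lt_of_le_of_lt hlam h
    have h1 : ∑ i, (x i - y i) ^ 2 = lam ^ 2 := by
      have : ∀ i, (x i - y i) ^ 2 = y i ^ 2 * (lam / Y) ^ 2 := fun i => by
        rw [hx i, if_neg (not_le.2 h)]; ring
      rw [Finset.sum_congr rfl fun i _ => this i, ← Finset.sum_mul, ← hYsq]
      field_simp
    have h2 : Real.sqrt (∑ i, x i ^ 2) = Y - lam := by
      have : ∀ i, x i ^ 2 = y i ^ 2 * (1 - lam / Y) ^ 2 := fun i => by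
        rw [hx i, if_neg (not_le.2 h)]; ring
      rw [Finset.sum_congr rfl fun i _ => this i, ← Finset.sum_mul, ← hYsq]
      have : Y ^ 2 * (1 - lam / Y) ^ 2 = (Y - lam) ^ 2 := by field_simp
      rw [this, Real.sqrt_sq (by linarith)]
    rw [h1, h2]
    nlinarith [sq_nonneg (t - Y + lam)]

lemma sum_split_tri (f : Fin k → Fin k → ℝ) (hf : ∀ i m, f m i = f i m) :
    ∑ i, ∑ m, f i m
      = ∑ i, ∑ m, ((if i < m then 2 * f i m else 0) + (if i = m then f i m else 0)) := by
  have key : ∀ i m : Fin k, f i m =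
      (if i < m then f i m else 0) + (if i = m then f i m else 0)
        + (if m < i then f i m else 0) := by
    intro i m
    rcases lt_trichotomy i m with h | h | h
    · simp [h, h.ne, lt_asymm h]
    · subst h; simp
    · simp [lt_asymm h, (ne_of_gt h), h]
  have hswap : ∑ i, ∑ m, (if m < i then f i m else 0)
      = ∑ i, ∑ m, (if i < m then f i m else 0) := by
    rw [Finset.sum_comm]
    exact Finset.sum_congr rfl fun i _ => Finset.sum_congr rfl fun m _ => by
      by_cases h : i < m <;> simp [h, hf]
  calc ∑ i, ∑ m, f i m
      = ∑ i, ∑ m, ((if i < m then f i m else 0) + (if i = m then f i m else 0)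
          + (if m < i then f i m else 0)) :=
        Finset.sum_congr rfl fun i _ => Finset.sum_congr rfl fun m _ => key i m
    _ = (∑ i, ∑ m, ((if i < m then f i m else 0) + (if i = m then f i m else 0)))
          + ∑ i, ∑ m, (if m < i then f i m else 0) := by
        simp [Finset.sum_add_distrib]
    _ = (∑ i, ∑ m, ((if i < m then f i m else 0) + (if i = m then f i m else 0)))
          + ∑ i, ∑ m, (if i < m then f i m else 0) := by rw [hswap]
    _ = ∑ i, ∑ m, ((if i < m then 2 * f i m else 0) + (if i = m then f i m else 0)) := by
        rw [← Finset.sum_add_distrib]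
        refine Finset.sum_congr rfl fun i _ => ?_
        rw [← Finset.sum_add_distrib]
        refine Finset.sum_congr rfl fun m _ => ?_
        by_cases h : i < m
        · simp [h]; ring
        · simp [h]

lemma Sblk_offdiag (M : Matrix (BIdx d) (BIdx d) ℝ) {i m : Fin k} (h : i ≠ m) :
    Sblk d M i m = Real.sqrt (∑ a : Fin (d i), ∑ b : Fin (d m), (M ⟨i, a⟩ ⟨m, b⟩) ^ 2) := by
  unfold Sblk
  congr 1
  exact Finset.sum_congr rfl fun a _ => Finset.sum_congr rfl fun b _ =>
    if_neg (sigma_mk_ne h a b)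

lemma Sblk_diag (M : Matrix (BIdx d) (BIdx d) ℝ) (i : Fin k) :
    Sblk d M i i = Real.sqrt (∑ a : Fin (d i), ∑ b : Fin (d i),
      if a = b then 0 else (M ⟨i, a⟩ ⟨i, b⟩) ^ 2) := by
  unfold Sblk
  congr 1
  exact Finset.sum_congr rfl fun a _ => Finset.sum_congr rfl fun b _ =>
    if_congr (sigma_mk_eq_iff a b) rfl rfl

lemma Sblk_symm {M : Matrix (BIdx d) (BIdx d) ℝ} (hM : M.IsSymm) (i m : Fin k) :
    Sblk d M m i = Sblk d M i m := by
  unfold Sblk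
  congr 1
  rw [Finset.sum_comm]
  refine Finset.sum_congr rfl fun a _ => Finset.sum_congr rfl fun b _ => ?_
  rw [hM.apply]
  exact if_congr eq_comm rfl rfl

lemma gamBlk_symm (i m : Fin k) : gamBlk d m i = gamBlk d i m := by
  unfold gamBlk
  by_cases h : i = m
  · subst h; simp
  · rw [if_neg h, if_neg (Ne.symm h), mul_comm]

lemma gamBlk_nonneg (i m : Fin k) : 0 ≤ gamBlk d i m := by
  unfold gamBlk; split <;> exact Real.sqrt_nonneg _

lemma sigmaStar_symm (d : Fin k → ℕ) (ω : ℝ) (Shat : Matrix (BIdx d) (BIdx d) ℝ)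
    (hs : Shat.IsSymm) : (sigmaStar d ω Shat).IsSymm := by
  show (sigmaStar d ω Shat)ᵀ = sigmaStar d ω Shat
  ext p r
  rw [Matrix.transpose_apply]
  by_cases h : p = r
  · subst h; rfl
  · show sigmaStar d ω Shat r p = sigmaStar d ω Shat p r
    unfold sigmaStar
    rw [if_neg (Ne.symm h), if_neg h, Sblk_symm hs, gamBlk_symm, hs.apply]

/-- The quadratic part of the objective restricted to block `(i, m)`. -/
noncomputable def qblk (d : Fin k → ℕ) (Shat S : Matrix (BIdx d) (BIdx d) ℝ)
    (i m : Fin k) : ℝ :=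
  ∑ a : Fin (d i), ∑ b : Fin (d m), (S ⟨i, a⟩ ⟨m, b⟩ - Shat ⟨i, a⟩ ⟨m, b⟩) ^ 2

/-- The Frobenius norm of block `(i, m)`. -/
noncomputable def nblk (d : Fin k → ℕ) (S : Matrix (BIdx d) (BIdx d) ℝ)
    (i m : Fin k) : ℝ :=
  Real.sqrt (∑ a : Fin (d i), ∑ b : Fin (d m), (S ⟨i, a⟩ ⟨m, b⟩) ^ 2)

lemma qblk_symm {Shat S : Matrix (BIdx d) (BIdx d) ℝ} (hs : Shat.IsSymm) (hS : S.IsSymm)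
    (i m : Fin k) : qblk d Shat S m i = qblk d Shat S i m := by
  unfold qblk
  rw [Finset.sum_comm]
  exact Finset.sum_congr rfl fun a _ => Finset.sum_congr rfl fun b _ => by
    rw [hS.apply, hs.apply]

/-- The objective regrouped per block. -/
noncomputable def Tgrp (d : Fin k → ℕ) (ω : ℝ) (Shat S : Matrix (BIdx d) (BIdx d) ℝ)
    (i m : Fin k) : ℝ :=
  if i < m then qblk d Shat S i m + 2 * ω * gamBlk d i m * nblk d S i m
  else if i = m then (1/2) * qblk d Shat S i m + ω * gamBlk d i i * Sblk d S i i
  else 0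

lemma obj_grouped (d : Fin k → ℕ) (ω : ℝ) {Shat S : Matrix (BIdx d) (BIdx d) ℝ}
    (hs : Shat.IsSymm) (hS : S.IsSymm) :
    objGL d ω Shat S = ∑ i, ∑ m, Tgrp d ω Shat S i m := by
  have hq : (∑ p : BIdx d, ∑ r : BIdx d, (S p r - Shat p r) ^ 2)
      = ∑ i, ∑ m, qblk d Shat S i m := by
    rw [← Finset.univ_sigma_univ (ι := Fin k) (κ := fun i => Fin (d i))]
    simp only [Finset.sum_sigma]
    exact Finset.sum_congr rfl fun i _ => by rw [Finset.sum_comm]; rfl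
  have hq2 : (1/2 : ℝ) * ∑ i, ∑ m, qblk d Shat S i m
      = ∑ i, ∑ m, ((if i < m then qblk d Shat S i m else 0)
          + (if i = m then (1/2) * qblk d Shat S i m else 0)) := by
    rw [Finset.mul_sum]
    simp only [Finset.mul_sum]
    rw [sum_split_tri (fun i m => (1/2) * qblk d Shat S i m)
      (fun i m => congrArg (fun t => (1/2 : ℝ) * t) (qblk_symm hs hS i m))]
    refine Finset.sum_congr rfl fun i _ => Finset.sum_congr rfl fun m _ => ?_
    by_cases h : i < m
    · simp [h, h.ne]
    · simp [h]
  have hp : 2 * ω * (∑ i, ∑ m, (if i < m then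
        Real.sqrt ((d i : ℝ) * (d m : ℝ)) *
          Real.sqrt (∑ a : Fin (d i), ∑ b : Fin (d m), (S ⟨i, a⟩ ⟨m, b⟩) ^ 2)
      else 0))
      = ∑ i, ∑ m, (if i < m then 2 * ω * gamBlk d i m * nblk d S i m else 0) := by
    rw [Finset.mul_sum]
    refine Finset.sum_congr rfl fun i _ => ?_
    rw [Finset.mul_sum]
    refine Finset.sum_congr rfl fun m _ => ?_
    by_cases h : i < m
    · rw [if_pos h, if_pos h]
      unfold gamBlk nblk
      rw [if_neg h.ne]
      ring
    · simp [h]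
  have hd : ω * (∑ i, Real.sqrt ((d i : ℝ) * ((d i : ℝ) - 1)) *
        Real.sqrt (∑ a : Fin (d i), ∑ b : Fin (d i),
          if a = b then 0 else (S ⟨i, a⟩ ⟨i, b⟩) ^ 2))
      = ∑ i, ∑ m, (if i = m then ω * gamBlk d m m * Sblk d S m m else 0) := by
    rw [Finset.mul_sum]
    refine Finset.sum_congr rfl fun i _ => ?_
    rw [Finset.sum_ite_eq]
    simp only [Finset.mem_univ, if_pos]
    rw [Sblk_diag]
    unfold gamBlk
    rw [if_pos rfl]
    ring
  unfold objGL
  rw [hq, hq2, hp, hd, ← Finset.sum_add_distrib, ← Finset.sum_add_distrib]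
  refine Finset.sum_congr rfl fun i _ => ?_
  rw [← Finset.sum_add_distrib, ← Finset.sum_add_distrib]
  refine Finset.sum_congr rfl fun m _ => ?_
  unfold Tgrp
  by_cases h1 : i < m
  · rw [if_pos h1]
    simp [h1, h1.ne]
  · rw [if_neg h1]
    by_cases h2 : i = m
    · subst h2; simp [h1]
    · simp [h1, h2]

lemma Tgrp_le (d : Fin k → ℕ) (ω : ℝ) (hω : 0 ≤ ω)
    (Shat : Matrix (BIdx d) (BIdx d) ℝ) (hs : Shat.IsSymm)
    (S : Matrix (BIdx d) (BIdx d) ℝ) (i m : Fin k) :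
    Tgrp d ω Shat (sigmaStar d ω Shat) i m ≤ Tgrp d ω Shat S i m := by
  by_cases h1 : i < m
  · -- off-diagonal block
    have hne : i ≠ m := h1.ne
    have hlam0 : 0 ≤ ω * gamBlk d i m := mul_nonneg hω (gamBlk_nonneg i m)
    set y : Fin (d i) × Fin (d m) → ℝ := fun p => Shat ⟨i, p.1⟩ ⟨m, p.2⟩ with hydef
    have hYeq : Real.sqrt (∑ p : Fin (d i) × Fin (d m), y p ^ 2) = Sblk d Shat i m := by
      rw [Fintype.sum_prod_type]
      exact (Sblk_offdiag Shat hne).symm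
    have key := prox_ineq y (fun p => S ⟨i, p.1⟩ ⟨m, p.2⟩) (ω * gamBlk d i m) hlam0
      (fun p => sigmaStar d ω Shat ⟨i, p.1⟩ ⟨m, p.2⟩) ?_
    · have hA : ∑ p : Fin (d i) × Fin (d m),
          (sigmaStar d ω Shat ⟨i, p.1⟩ ⟨m, p.2⟩ - y p) ^ 2
            = qblk d Shat (sigmaStar d ω Shat) i m := by
        rw [Fintype.sum_prod_type]; rfl
      have hB : Real.sqrt (∑ p : Fin (d i) × Fin (d m),
          sigmaStar d ω Shat ⟨i, p.1⟩ ⟨m, p.2⟩ ^ 2) = nblk d (sigmaStar d ω Shat) i m := by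
        rw [Fintype.sum_prod_type]; rfl
      have hC : ∑ p : Fin (d i) × Fin (d m), (S ⟨i, p.1⟩ ⟨m, p.2⟩ - y p) ^ 2
          = qblk d Shat S i m := by
        rw [Fintype.sum_prod_type]; rfl
      have hD : Real.sqrt (∑ p : Fin (d i) × Fin (d m), S ⟨i, p.1⟩ ⟨m, p.2⟩ ^ 2)
          = nblk d S i m := by
        rw [Fintype.sum_prod_type]; rfl
      rw [hA, hB, hC, hD] at key
      unfold Tgrp
      rw [if_pos h1, if_pos h1]
      nlinarith [key]
    · intro p
      rw [hYeq]
      show sigmaStar d ω Shat ⟨i, p.1⟩ ⟨m, p.2⟩ = _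
      unfold sigmaStar
      rw [if_neg (sigma_mk_ne hne p.1 p.2)]
  · by_cases h2 : i = m
    · -- diagonal block
      subst h2
      have hlam0 : 0 ≤ ω * gamBlk d i i := mul_nonneg hω (gamBlk_nonneg i i)
      set y : Fin (d i) × Fin (d i) → ℝ :=
        fun p => if p.1 = p.2 then 0 else Shat ⟨i, p.1⟩ ⟨i, p.2⟩ with hydef
      set z : Fin (d i) × Fin (d i) → ℝ :=
        fun p => if p.1 = p.2 then 0 else S ⟨i, p.1⟩ ⟨i, p.2⟩ with hzdef
      set x : Fin (d i) × Fin (d i) → ℝ :=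
        fun p => if p.1 = p.2 then 0 else sigmaStar d ω Shat ⟨i, p.1⟩ ⟨i, p.2⟩ with hxdef
      have hmask : ∀ (M : Matrix (BIdx d) (BIdx d) ℝ),
          (∑ p : Fin (d i) × Fin (d i),
            (if p.1 = p.2 then (0:ℝ) else M ⟨i, p.1⟩ ⟨i, p.2⟩) ^ 2)
          = ∑ a : Fin (d i), ∑ b : Fin (d i), if a = b then 0 else (M ⟨i, a⟩ ⟨i, b⟩) ^ 2 := by
        intro M
        rw [Fintype.sum_prod_type]
        refine Finset.sum_congr rfl fun a _ => Finset.sum_congr rfl fun b _ => ?_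
        by_cases hab : a = b <;> simp [hab]
      have hY : Real.sqrt (∑ p : Fin (d i) × Fin (d i), y p ^ 2) = Sblk d Shat i i := by
        rw [hydef, hmask Shat]; exact (Sblk_diag Shat i).symm
      have hZ : Real.sqrt (∑ p : Fin (d i) × Fin (d i), z p ^ 2) = Sblk d S i i := by
        rw [hzdef, hmask S]; exact (Sblk_diag S i).symm
      have hX : Real.sqrt (∑ p : Fin (d i) × Fin (d i), x p ^ 2)
          = Sblk d (sigmaStar d ω Shat) i i := by
        rw [hxdef, hmask (sigmaStar d ω Shat)]
        exact (Sblk_diag (sigmaStar d ω Shat) i).symm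
      have key := prox_ineq y z (ω * gamBlk d i i) hlam0 x ?_
      · have hqx : ∑ p : Fin (d i) × Fin (d i), (x p - y p) ^ 2
            = qblk d Shat (sigmaStar d ω Shat) i i := by
          rw [Fintype.sum_prod_type]
          refine Finset.sum_congr rfl fun a _ => Finset.sum_congr rfl fun b _ => ?_
          by_cases hab : a = b
          · subst hab
            have : sigmaStar d ω Shat ⟨i, a⟩ ⟨i, a⟩ = Shat ⟨i, a⟩ ⟨i, a⟩ := by
              unfold sigmaStar; rw [if_pos rfl]
            simp [hxdef, hydef, qblk, this]
          · simp [hxdef, hydef, hab, qblk]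
        have hqz : ∑ p : Fin (d i) × Fin (d i), (z p - y p) ^ 2 ≤ qblk d Shat S i i := by
          unfold qblk
          rw [Fintype.sum_prod_type]
          refine Finset.sum_le_sum fun a _ => Finset.sum_le_sum fun b _ => ?_
          by_cases hab : a = b
          · simp [hzdef, hydef, hab, sq_nonneg]
          · simp [hzdef, hydef, hab]
        rw [hqx, hX, hZ] at key
        unfold Tgrp
        rw [if_neg h1, if_pos rfl, if_neg h1, if_pos rfl]
        have hSnn : 0 ≤ Sblk d S i i := Real.sqrt_nonneg _
        nlinarith [key, hqz]
      · intro p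
        rw [hY]
        by_cases hp : p.1 = p.2
        · simp [hxdef, hydef, hp]
        · have hne' : (⟨i, p.1⟩ : BIdx d) ≠ ⟨i, p.2⟩ := by
            rw [Ne, sigma_mk_eq_iff]; exact hp
          show (if p.1 = p.2 then (0:ℝ) else sigmaStar d ω Shat ⟨i, p.1⟩ ⟨i, p.2⟩) = _
          rw [if_neg hp]
          unfold sigmaStar
          rw [if_neg hne']
          simp [hydef, hp]
    · unfold Tgrp
      rw [if_neg h1, if_neg h2, if_neg h1, if_neg h2]

/-- The blockwise soft-thresholding matrix `Σ*` solves the group-lasso proximal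
problem: it is symmetric and minimizes the objective over all symmetric matrices. -/
theorem sigmaStar_isMinOn (d : Fin k → ℕ) (ω : ℝ) (hω : 0 ≤ ω)
    (Shat : Matrix (BIdx d) (BIdx d) ℝ) (hs : Shat.IsSymm) :
    (sigmaStar d ω Shat).IsSymm ∧
      ∀ S : Matrix (BIdx d) (BIdx d) ℝ, S.IsSymm →
        objGL d ω Shat (sigmaStar d ω Shat) ≤ objGL d ω Shat S := by
  have hsym := sigmaStar_symm d ω Shat hs
  refine ⟨hsym, fun S hS => ?_⟩
  rw [obj_grouped d ω hs hsym, obj_grouped d ω hs hS]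
  exact Finset.sum_le_sum fun i _ => Finset.sum_le_sum fun m _ =>
    Tgrp_le d ω hω Shat hs S i m
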